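/- Let Ω ⊂ ℝⁿ be open, q > -1, and ρ ∈ C²(Ω) a positive function with Δρ ≥ 0 on Ω (ρ subharmonic). Then for every u ∈ C_0^∞(Ω): ((1+q)²/4) ∫_Ω ρ^q |∇ρ|² u² dx ≤ ∫_Ω ρ^{2+q} |∇u|² dx. -/

import Mathlib

open MeasureTheory Set Filter Topology Manifold

noncomputable def lap {n : ℕ} (f : EuclideanSpace ℝ (Fin n) → ℝ)
    (x : EuclideanSpace ℝ (Fin n)) : ℝ :=
  ∑ i, fderiv ℝ (fun y => fderiv ℝ f y (EuclideanSpace.single i 1)) x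
      (EuclideanSpace.single i 1)

lemma grad_apply {n : ℕ} (f : EuclideanSpace ℝ (Fin n) → ℝ) (x : EuclideanSpace ℝ (Fin n))
    (i : Fin n) : gradient f x i = fderiv ℝ f x (EuclideanSpace.single i 1) := by
  have h : (inner ℝ (gradient f x) (EuclideanSpace.single i (1:ℝ)) : ℝ)
      = fderiv ℝ f x (EuclideanSpace.single i 1) :=
    InnerProductSpace.toDual_symm_apply
  rwa [EuclideanSpace.inner_single_right, RCLike.conj_to_real, one_mul] at h

lemma norm_grad_sq {n : ℕ} (f : EuclideanSpace ℝ (Fin n) → ℝ) (x : EuclideanSpace ℝ (Fin n)) :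
    ‖gradient f x‖ ^ 2 = ∑ i, (fderiv ℝ f x (EuclideanSpace.single i 1)) ^ 2 := by
  rw [EuclideanSpace.norm_eq, Real.sq_sqrt (by positivity)]
  exact Finset.sum_congr rfl fun i _ => by rw [grad_apply, Real.norm_eq_abs, sq_abs]

set_option maxHeartbeats 1000000 in
lemma main_aux {n : ℕ} (q : ℝ) (hq : -1 < q) (σ u : EuclideanSpace ℝ (Fin n) → ℝ)
    (hσ : ContDiff ℝ 2 σ) (hσpos : ∀ x, 0 < σ x)
    (hu : ContDiff ℝ (((⊤:ℕ∞)):WithTop ℕ∞) u) (hcs : HasCompactSupport u)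
    (hlap : ∀ x, u x ≠ 0 → 0 ≤ lap σ x) :
    (1+q)^2/4 * ∫ x, σ x ^ q * ‖gradient σ x‖^2 * u x ^2
      ≤ ∫ x, σ x ^ (2+q) * ‖gradient u x‖^2 := by
  have h1q : (0:ℝ) < 1 + q := by linarith
  have hu2 : ContDiff ℝ 2 u := hu.of_le (by rw [show ((2:WithTop ℕ∞)) = (((2:ℕ∞)):WithTop ℕ∞) from rfl]; exact WithTop.coe_le_coe.mpr le_top)
  set e : Fin n → EuclideanSpace ℝ (Fin n) := fun i => EuclideanSpace.single i 1 with he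
  set K := tsupport u with hK
  have hKc : IsCompact K := hcs
  have huz : ∀ x, x ∉ K → u x = 0 := fun x hx => image_eq_zero_of_notMem_tsupport hx
  have hudiff : Differentiable ℝ u := hu2.differentiable two_ne_zero
  have hσdiff : Differentiable ℝ σ := hσ.differentiable two_ne_zero
  have hDuz : ∀ x, x ∉ K → fderiv ℝ u x = 0 := by
    intro x hx
    have h : u =ᶠ[𝓝 x] (fun _ => 0) := notMem_tsupport_iff_eventuallyEq.mp hx
    rw [h.fderiv_eq]; exact fderiv_const_apply 0
  -- continuity facts
  have hσc : Continuous σ := hσ.continuous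
  have hσrpow : ∀ p : ℝ, Continuous (fun x => σ x ^ p) :=
    fun p => hσc.rpow_const (fun x => Or.inl (hσpos x).ne')
  have hDσcd : ContDiff ℝ 1 (fderiv ℝ σ) := hσ.fderiv_right (m := 1) (by norm_num)
  have hDσc : Continuous (fderiv ℝ σ) := hDσcd.continuous
  have hDuc : Continuous (fderiv ℝ u) :=
    (hu2.fderiv_right (m := 1) (by norm_num)).continuous
  have hgradσc : Continuous (gradient σ) :=
    (InnerProductSpace.toDual ℝ (EuclideanSpace ℝ (Fin n))).symm.continuous.comp hDσc
  have hgraduc : Continuous (gradient u) :=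
    (InnerProductSpace.toDual ℝ (EuclideanSpace ℝ (Fin n))).symm.continuous.comp hDuc
  -- the functions
  set F : EuclideanSpace ℝ (Fin n) → ℝ := fun x => σ x ^ (1+q) * u x ^ 2 with hF
  set F' : EuclideanSpace ℝ (Fin n) → (EuclideanSpace ℝ (Fin n) →L[ℝ] ℝ) := fun x =>
    ((1+q) * σ x ^ q * u x ^ 2) • fderiv ℝ σ x + (2 * σ x ^ (1+q) * u x) • fderiv ℝ u x with hF'
  set G : Fin n → EuclideanSpace ℝ (Fin n) → ℝ := fun i x => fderiv ℝ σ x (e i) with hG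
  set a : EuclideanSpace ℝ (Fin n) → ℝ := fun x => σ x ^ q * ‖gradient σ x‖ ^ 2 * u x ^ 2 with ha
  set b : EuclideanSpace ℝ (Fin n) → ℝ := fun x => σ x ^ (2+q) * ‖gradient u x‖ ^ 2 with hb
  set w : EuclideanSpace ℝ (Fin n) → ℝ := fun x => 2 * σ x ^ (1+q) * u x * (inner ℝ (gradient u x) (gradient σ x) : ℝ)
    with hw
  have hFderiv : ∀ x, HasFDerivAt F (F' x) x := by
    intro x
    have h1 : HasFDerivAt (fun y => σ y ^ (1+q)) (((1+q) * σ x ^ q) • fderiv ℝ σ x) x := by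
      have h := (hσdiff x).hasFDerivAt.rpow_const (p := 1+q) (Or.inl (hσpos x).ne')
      simpa [add_sub_cancel_left] using h
    have h2 : HasFDerivAt (fun y => u y ^ 2) ((2 * u x) • fderiv ℝ u x) x := by
      have h2' : HasFDerivAt (fun y => u y * u y) (u x • fderiv ℝ u x + u x • fderiv ℝ u x) x :=
        (hudiff x).hasFDerivAt.mul (hudiff x).hasFDerivAt
      have heq : (fun y => u y * u y) = fun y => u y ^ 2 := by funext y; rw [sq]
      rw [heq] at h2'
      convert h2' using 1
      module
    have h3 : HasFDerivAt F (σ x ^ (1+q) • (2 * u x) • fderiv ℝ u x + u x ^ 2 • ((1 + q) * σ x ^ q) • fderiv ℝ σ x) x := h1.mul h2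
    convert h3 using 1
    ext v
    simp only [hF', ContinuousLinearMap.add_apply, ContinuousLinearMap.coe_smul',
      Pi.smul_apply, smul_eq_mul]
    push_cast
    ring
  have hFdiff : Differentiable ℝ F := fun x => (hFderiv x).differentiableAt
  have hDF : ∀ x, fderiv ℝ F x = F' x := fun x => (hFderiv x).fderiv
  have hGcd : ∀ i, ContDiff ℝ 1 (G i) := by
    intro i
    exact (ContinuousLinearMap.apply ℝ ℝ (e i)).contDiff.comp hDσcd
  have hGdiff : ∀ i, Differentiable ℝ (G i) := fun i => (hGcd i).differentiable one_ne_zero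
  -- integrability
  have hInt : ∀ f : EuclideanSpace ℝ (Fin n) → ℝ, Continuous f → (∀ x, x ∉ K → f x = 0) →
      Integrable f := fun f hf h0 =>
    hf.integrable_of_hasCompactSupport (HasCompactSupport.intro hKc h0)
  have hFc : Continuous F := (hσrpow (1+q)).mul (hu.continuous.pow 2)
  have hFz : ∀ x, x ∉ K → F x = 0 := fun x hx => by simp [hF, huz x hx]
  have hGc : ∀ i, Continuous (G i) := fun i =>
    ((ContinuousLinearMap.apply ℝ ℝ (e i)).continuous).comp hDσc
  have hDGc : ∀ i, Continuous (fun x => fderiv ℝ (G i) x (e i)) := fun i =>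
    ((ContinuousLinearMap.apply ℝ ℝ (e i)).continuous).comp
      (((hGcd i).fderiv_right (m := 0) (by norm_num)).continuous)
  have hDσci : ∀ i, Continuous (fun x => fderiv ℝ σ x (e i)) := fun i =>
    ((ContinuousLinearMap.apply ℝ ℝ (e i)).continuous).comp hDσc
  have hDuci : ∀ i, Continuous (fun x => fderiv ℝ u x (e i)) := fun i =>
    ((ContinuousLinearMap.apply ℝ ℝ (e i)).continuous).comp hDuc
  have hF'c : ∀ i, Continuous (fun x => F' x (e i)) := by
    intro i
    have : (fun x => F' x (e i)) = fun x =>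
        ((1+q) * σ x ^ q * u x ^ 2) * fderiv ℝ σ x (e i)
          + (2 * σ x ^ (1+q) * u x) * fderiv ℝ u x (e i) := by
      funext x
      simp [hF']
    rw [this]
    exact (((continuous_const.mul (hσrpow q)).mul (hu.continuous.pow 2)).mul (hDσci i)).add
      (((continuous_const.mul (hσrpow (1+q))).mul hu.continuous).mul (hDuci i))
  have hF'z : ∀ x, x ∉ K → F' x = 0 := fun x hx => by
    simp [hF', huz x hx, hDuz x hx]
  have hI1 : ∀ i, Integrable (fun x => F x * fderiv ℝ (G i) x (e i)) := fun i =>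
    hInt _ (hFc.mul (hDGc i)) (fun x hx => by rw [hFz x hx, zero_mul])
  have hI2 : ∀ i, Integrable (fun x => fderiv ℝ F x (e i) * G i x) := by
    intro i
    simp only [hDF]
    exact hInt _ ((hF'c i).mul (hGc i)) (fun x hx => by rw [hF'z x hx]; simp)
  have hI3 : ∀ i, Integrable (fun x => F x * G i x) := fun i =>
    hInt _ (hFc.mul (hGc i)) (fun x hx => by rw [hFz x hx, zero_mul])
  have hgraduz : ∀ x, x ∉ K → gradient u x = 0 := fun x hx => by
    simp [gradient, hDuz x hx]
  have hIa : Integrable a :=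
    hInt _ (((hσrpow q).mul (hgradσc.norm.pow 2)).mul (hu.continuous.pow 2))
      (fun x hx => by simp [ha, huz x hx])
  have hIb : Integrable b :=
    hInt _ ((hσrpow (2+q)).mul (hgraduc.norm.pow 2))
      (fun x hx => by simp [hb, hgraduz x hx])
  have hIw : Integrable w :=
    hInt _ ((((continuous_const.mul (hσrpow (1+q))).mul hu.continuous)).mul
        (hgraduc.inner hgradσc))
      (fun x hx => by simp [hw, huz x hx])
  have hlapeq : ∀ x, lap σ x = ∑ i, fderiv ℝ (G i) x (e i) := fun x => by
    simp only [lap, hG, he]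
  have hlapc : Continuous (lap σ) := by
    have : Continuous (fun x => ∑ i, fderiv ℝ (G i) x (e i)) :=
      continuous_finset_sum _ (fun i _ => hDGc i)
    exact this.congr (fun x => (hlapeq x).symm)
  have hIlap : Integrable (fun x => F x * lap σ x) :=
    hInt _ (hFc.mul hlapc) (fun x hx => by rw [hFz x hx, zero_mul])
  -- integration by parts
  have key : ∀ i, ∫ x, F x * fderiv ℝ (G i) x (e i) = - ∫ x, fderiv ℝ F x (e i) * G i x :=
    fun i => integral_mul_fderiv_eq_neg_fderiv_mul_of_integrable (hI2 i) (hI1 i) (hI3 i)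
      (fun x _ => hFdiff x) (fun x _ => hGdiff i x)
  -- pointwise identity for the sum
  have hinner : ∀ x, (inner ℝ (gradient u x) (gradient σ x) : ℝ)
      = ∑ i, fderiv ℝ u x (e i) * fderiv ℝ σ x (e i) := by
    intro x
    rw [PiLp.inner_apply]
    simp only [RCLike.inner_apply, conj_trivial]
    exact Finset.sum_congr rfl fun i _ => by rw [grad_apply, grad_apply, he, mul_comm]
  have hsum : ∀ x, ∑ i, fderiv ℝ F x (e i) * G i x = (1+q) * a x + w x := by
    intro x
    simp only [hDF]
    have expand : ∀ i, F' x (e i) * G i x =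
        ((1+q) * σ x ^ q * u x ^ 2) * (fderiv ℝ σ x (e i))^2
          + (2 * σ x ^ (1+q) * u x) * (fderiv ℝ u x (e i) * fderiv ℝ σ x (e i)) := by
      intro i
      simp only [hF', hG, ContinuousLinearMap.add_apply, ContinuousLinearMap.coe_smul',
        Pi.smul_apply, smul_eq_mul]
      ring
    rw [Finset.sum_congr rfl (fun i _ => expand i), Finset.sum_add_distrib,
      ← Finset.mul_sum, ← Finset.mul_sum, ← norm_grad_sq, ← hinner x]
    simp only [ha, hw]
    ring
  have E1 : ∫ x, F x * lap σ x = - ((1+q) * (∫ x, a x) + (∫ x, w x)) := by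
    have step1 : ∫ x, F x * lap σ x = ∑ i, ∫ x, F x * fderiv ℝ (G i) x (e i) := by
      rw [← integral_finset_sum _ (fun i _ => hI1 i)]
      congr 1
      funext x
      rw [hlapeq x, Finset.mul_sum]
    have step2 : ∑ i, ∫ x, F x * fderiv ℝ (G i) x (e i)
        = - ∑ i, ∫ x, fderiv ℝ F x (e i) * G i x := by
      rw [← Finset.sum_neg_distrib]
      exact Finset.sum_congr rfl fun i _ => key i
    have step3 : ∑ i, ∫ x, fderiv ℝ F x (e i) * G i x
        = ∫ x, ∑ i, fderiv ℝ F x (e i) * G i x :=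
      (integral_finset_sum _ (fun i _ => hI2 i)).symm
    have step4 : ∫ x, ∑ i, fderiv ℝ F x (e i) * G i x
        = (1+q) * (∫ x, a x) + (∫ x, w x) := by
      rw [show (fun x => ∑ i, fderiv ℝ F x (e i) * G i x)
          = fun x => (1+q) * a x + w x from funext hsum]
      rw [integral_add (hIa.const_mul (1+q)) hIw, integral_const_mul]
    rw [step1, step2, step3, step4]
  have E2 : 0 ≤ ∫ x, F x * lap σ x := by
    apply integral_nonneg
    intro x
    by_cases hux : u x = 0
    · simp [hF, hux]
    · exact mul_nonneg (mul_nonneg (Real.rpow_nonneg (hσpos x).le _) (sq_nonneg _))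
        (hlap x hux)
  have E4 : ∀ x, -((1+q) * w x) ≤ (1+q)^2/2 * a x + 2 * b x := by
    intro x
    have hσhalf : ∀ p r : ℝ, σ x ^ p * σ x ^ r = σ x ^ (p + r) := fun p r =>
      (Real.rpow_add (hσpos x) p r).symm
    set X := σ x ^ (q/2) * (‖gradient σ x‖ * |u x|) with hX
    set Y := σ x ^ ((2+q)/2) * ‖gradient u x‖ with hY
    have h1 : X^2 = a x := by
      have h : X^2 = (σ x ^ (q/2) * σ x ^ (q/2)) * (‖gradient σ x‖^2 * |u x|^2) := by
        rw [hX]; ring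
      rw [h, hσhalf, show q/2 + q/2 = q by ring, sq_abs, ha]
      ring
    have h2 : Y^2 = b x := by
      have h : Y^2 = (σ x ^ ((2+q)/2) * σ x ^ ((2+q)/2)) * ‖gradient u x‖^2 := by
        rw [hY]; ring
      rw [h, hσhalf, show (2+q)/2 + (2+q)/2 = 2+q by ring, hb]
    have h3 : X * Y = σ x ^ (1+q) * (‖gradient σ x‖ * |u x| * ‖gradient u x‖) := by
      have h : X*Y = (σ x ^ (q/2) * σ x ^ ((2+q)/2))
          * (‖gradient σ x‖ * |u x| * ‖gradient u x‖) := by rw [hX, hY]; ring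
      rw [h, hσhalf, show q/2 + (2+q)/2 = 1+q by ring]
    have hrp : (0:ℝ) < σ x ^ (1+q) := Real.rpow_pos_of_pos (hσpos x) _
    have habs : |w x| ≤ 2 * (X * Y) := by
      have hw1 : |w x| = 2 * σ x ^ (1+q) * |u x|
          * |(inner ℝ (gradient u x) (gradient σ x) : ℝ)| := by
        rw [hw, abs_mul, abs_mul, abs_mul, abs_two, abs_of_pos hrp]
      rw [hw1, h3]
      calc 2 * σ x ^ (1+q) * |u x| * |(inner ℝ (gradient u x) (gradient σ x) : ℝ)|
          ≤ 2 * σ x ^ (1+q) * |u x| * (‖gradient u x‖ * ‖gradient σ x‖) := by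
            gcongr
            exact abs_real_inner_le_norm _ _
        _ = 2 * (σ x ^ (1+q) * (‖gradient σ x‖ * |u x| * ‖gradient u x‖)) := by ring
    have h5 := mul_le_mul_of_nonneg_left (neg_le_abs (w x)) h1q.le
    have h6 := mul_le_mul_of_nonneg_left habs h1q.le
    nlinarith [h5, h6, h1, h2, sq_nonneg ((1+q)*X - 2*Y)]
  have hstep : (1+q)^2 * (∫ x, a x) ≤ (1+q)^2/2 * (∫ x, a x) + 2 * (∫ x, b x) := by
    rw [E1] at E2
    have h9 : (1+q) * (∫ x, a x) ≤ - ∫ x, w x := by linarith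
    have h10 := mul_le_mul_of_nonneg_left h9 h1q.le
    have h8 : ∫ x, (-((1+q) * w x)) ≤ ∫ x, ((1+q)^2/2 * a x + 2 * b x) :=
      integral_mono ((hIw.const_mul (1+q)).neg)
        ((hIa.const_mul _).add (hIb.const_mul 2)) (fun x => E4 x)
    rw [integral_neg, integral_const_mul,
      integral_add (hIa.const_mul _) (hIb.const_mul 2),
      integral_const_mul, integral_const_mul] at h8
    nlinarith [h10, h8]
  show (1+q)^2/4 * (∫ x, a x) ≤ ∫ x, b x
  nlinarith [hstep]

lemma cutoff {n : ℕ} {Ω : Set (EuclideanSpace ℝ (Fin n))} (hΩ : IsOpen Ω)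
    {K : Set (EuclideanSpace ℝ (Fin n))} (hK : IsClosed K) (hKΩ : K ⊆ Ω) :
    ∃ χ : EuclideanSpace ℝ (Fin n) → ℝ, ContDiff ℝ ((⊤:ℕ∞):WithTop ℕ∞) χ ∧
      (∃ U, IsOpen U ∧ Ωᶜ ⊆ U ∧ ∀ x ∈ U, χ x = 0) ∧
      (∃ V, IsOpen V ∧ K ⊆ V ∧ ∀ x ∈ V, χ x = 1) ∧ ∀ x, χ x ∈ Icc (0:ℝ) 1 := by
  obtain ⟨f, h0, h1, hf⟩ := exists_contMDiffMap_zero_one_nhds_of_isClosed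
    (𝓘(ℝ, EuclideanSpace ℝ (Fin n))) (n := (⊤:ℕ∞)) hΩ.isClosed_compl hK
    (disjoint_left.mpr fun x hx hx2 => hx (hKΩ hx2))
  rw [eventually_nhdsSet_iff_exists] at h0 h1
  obtain ⟨U, hUo, hU, hU0⟩ := h0
  obtain ⟨V, hVo, hV, hV1⟩ := h1
  exact ⟨f, f.contMDiff.contDiff, ⟨U, hUo, hU, hU0⟩, ⟨V, hVo, hV, hV1⟩, hf⟩

theorem caccioppoli_type (n : ℕ) (Ω : Set (EuclideanSpace ℝ (Fin n)))
    (hΩ : IsOpen Ω) (q : ℝ) (hq : -1 < q)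
    (ρ : EuclideanSpace ℝ (Fin n) → ℝ)
    (hρC2 : ContDiffOn ℝ 2 ρ Ω) (hρpos : ∀ x ∈ Ω, 0 < ρ x)
    (hsub : ∀ x ∈ Ω, 0 ≤ lap ρ x)
    (u : EuclideanSpace ℝ (Fin n) → ℝ)
    (hu : ContDiff ℝ (⊤ : ℕ∞) u) (hcs : HasCompactSupport u) (hsupp : tsupport u ⊆ Ω) :
    (1 + q) ^ 2 / 4 * ∫ x in Ω, ρ x ^ q * ‖gradient ρ x‖ ^ 2 * (u x) ^ 2
      ≤ ∫ x in Ω, ρ x ^ (2 + q) * ‖gradient u x‖ ^ 2 := by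
  obtain ⟨χ, hχs, ⟨U, hUo, hUc, hU0⟩, ⟨V, hVo, hVK, hV1⟩, hχ01⟩ :=
    cutoff hΩ (isClosed_tsupport u) hsupp
  have hVΩ : V ⊆ Ω := by
    intro x hx
    by_contra h
    have h1 := hV1 x hx
    rw [hU0 x (hUc h)] at h1
    exact one_ne_zero h1.symm
  set σ : EuclideanSpace ℝ (Fin n) → ℝ := fun x => χ x * ρ x + (1 - χ x) with hσdef
  have hσV : Set.EqOn σ ρ V := fun x hx => by simp [hσdef, hV1 x hx]
  have hσ2 : ContDiff ℝ 2 σ := by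
    rw [contDiff_iff_contDiffAt]
    intro x
    by_cases hx : x ∈ Ω
    · have hρat : ContDiffAt ℝ 2 ρ x := hρC2.contDiffAt (hΩ.mem_nhds hx)
      have hχat : ContDiffAt ℝ 2 χ x :=
        (hχs.of_le (by rw [show ((2:WithTop ℕ∞)) = (((2:ℕ∞)):WithTop ℕ∞) from rfl]; exact WithTop.coe_le_coe.mpr le_top)).contDiffAt
      exact (hχat.mul hρat).add (contDiffAt_const.sub hχat)
    · apply ContDiffAt.congr_of_eventuallyEq (contDiffAt_const (c := 1))
      filter_upwards [hUo.mem_nhds (hUc hx)] with y hy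
      simp [hσdef, hU0 y hy]
  have hσpos : ∀ x, 0 < σ x := by
    intro x
    by_cases hx : x ∈ Ω
    · rcases lt_or_eq_of_le (hχ01 x).2 with h | h
      · have h0 := (hχ01 x).1
        have hρx := hρpos x hx
        simp only [hσdef]
        nlinarith
      · have hρx := hρpos x hx
        simp [hσdef, h]
        nlinarith [(hχ01 x).1]
    · have h0 : χ x = 0 := hU0 x (hUc hx)
      simp [hσdef, h0]
  have hDσρ : ∀ y ∈ V, fderiv ℝ σ y = fderiv ℝ ρ y := fun y hy =>
    Filter.EventuallyEq.fderiv_eq (eventually_of_mem (hVo.mem_nhds hy) (fun z hz => hσV hz))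
  have hgradV : ∀ y ∈ V, gradient σ y = gradient ρ y := fun y hy => by
    simp [gradient, hDσρ y hy]
  have hlapV : ∀ x ∈ V, lap σ x = lap ρ x := by
    intro x hx
    unfold lap
    apply Finset.sum_congr rfl
    intro i _
    have hev : (fun y => fderiv ℝ σ y (EuclideanSpace.single i 1))
        =ᶠ[𝓝 x] (fun y => fderiv ℝ ρ y (EuclideanSpace.single i 1)) :=
      eventually_of_mem (hVo.mem_nhds hx) (fun z hz => by simp only [hDσρ z hz])
    rw [hev.fderiv_eq]
  have hlapnn : ∀ x, u x ≠ 0 → 0 ≤ lap σ x := by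
    intro x hux
    have hxV : x ∈ V := hVK (subset_tsupport u hux)
    rw [hlapV x hxV]
    exact hsub x (hVΩ hxV)
  have huz : ∀ x, x ∉ tsupport u → u x = 0 := fun x hx => image_eq_zero_of_notMem_tsupport hx
  have hgraduz : ∀ x, x ∉ tsupport u → gradient u x = 0 := by
    intro x hx
    have h : u =ᶠ[𝓝 x] (fun _ => 0) := notMem_tsupport_iff_eventuallyEq.mp hx
    simp [gradient, h.fderiv_eq, fderiv_const_apply]
  have hL : (∫ x in Ω, ρ x ^ q * ‖gradient ρ x‖ ^ 2 * (u x) ^ 2)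
      = ∫ x, σ x ^ q * ‖gradient σ x‖ ^ 2 * (u x) ^ 2 := by
    rw [setIntegral_congr_fun hΩ.measurableSet (g := fun x => σ x ^ q * ‖gradient σ x‖ ^ 2 * (u x) ^ 2)
      (fun x hx => by
        beta_reduce
        by_cases hxV : x ∈ V
        · rw [hσV hxV, hgradV x hxV]
        · rw [huz x (fun hK => hxV (hVK hK))]
          simp)]
    exact setIntegral_eq_integral_of_forall_compl_eq_zero (fun x hx => by
      beta_reduce
      rw [huz x (fun hK => hx (hsupp hK))]; simp)
  have hR : (∫ x in Ω, ρ x ^ (2+q) * ‖gradient u x‖ ^ 2)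
      = ∫ x, σ x ^ (2+q) * ‖gradient u x‖ ^ 2 := by
    rw [setIntegral_congr_fun hΩ.measurableSet (g := fun x => σ x ^ (2+q) * ‖gradient u x‖ ^ 2)
      (fun x hx => by
        beta_reduce
        by_cases hxV : x ∈ V
        · rw [hσV hxV]
        · rw [hgraduz x (fun hK => hxV (hVK hK))]
          simp)]
    exact setIntegral_eq_integral_of_forall_compl_eq_zero (fun x hx => by
      beta_reduce
      rw [hgraduz x (fun hK => hx (hsupp hK))]; simp)
  rw [hL, hR]
  exact main_aux q hq σ u hσ2 hσpos (hu.of_le (by simp)) hcs hlapnn
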